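/- Let P ⊆ ℝ^N be a closed, convex and CP admissible set. Then for every matrix A ∈ ℝ^{m×N}, every index set 𝒥 ⊆ {1,…,N}, and every y ∈ ℝ^m, the problem min_w ‖A w − y‖₂² subject to w ∈ P and supp(w) ⊆ 𝒥 attains an optimal solution. In particular, A P = {A x : x ∈ P} is a closed subset of ℝ^m. -/

import Mathlib

open Matrix Set

/-- `P` is coordinate projection (CP) admissible: for every `x ∈ P` and every
index set `J ⊆ supp(x)`, the coordinate projection `π_J(x)` belongs to `P`. -/
def CPAdmissible {N : ℕ} (P : Set (Fin N → ℝ)) : Prop :=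
  ∀ x ∈ P, ∀ J : Set (Fin N), J ⊆ {i | x i ≠ 0} → J.indicator x ∈ P

/-!
Fix a linear map `f` and write `P_J = {w ∈ P | supp w ⊆ J}`; `f '' P_J` is closed, by strong
induction on `J`. Let `f w_n → p` with `w_n ∈ P_J`. If `(w_n)` is frequently bounded, a limit point
of a subsequence is a preimage of `p`. Otherwise a subsequence of `w_n / ‖w_n‖` converges to some
`d ≠ 0` with `f d = 0`, and eventually `w_n` has the signs of `d` on `supp d`. Subtracting the
largest multiple `t • d` compatible with these signs kills a coordinate `i ∈ J` and only shrinks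
the others, so by convexity and CP admissibility `w_n - t • d ∈ P_{J \ {i}}`, with the same image.
Hence `p` lies in the finite union of the closed sets `f '' P_{J \ {i}}`, which is contained in
`f '' P_J`. The least-squares objective is coercive, so it attains its minimum on the closed
nonempty set `A '' P_J`.
-/

open Filter Topology Function Metric

theorem eventually_pos_mul_of_tendsto {ι α : Type*} [Finite ι] {l : Filter α} {u : α → ι → ℝ}
    {d : ι → ℝ} (hu : Tendsto u l (𝓝 d)) : ∀ᶠ a in l, ∀ i, d i ≠ 0 → 0 < u a i * d i := by
  refine eventually_all.2 fun i => ?_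
  by_cases hi : d i = 0
  · exact .of_forall fun _ h => absurd hi h
  · have := ((tendsto_pi_nhds.1 hu i).mul_const (d i)).eventually
      (lt_mem_nhds (mul_self_pos.2 hi))
    exact this.mono fun _ h _ => h

theorem exists_ne_zero_map_eq_zero_of_tendsto_norm_atTop {E F : Type*} [NormedAddCommGroup E]
    [NormedSpace ℝ E] [ProperSpace E] [NormedAddCommGroup F] [NormedSpace ℝ F] {f : E →L[ℝ] F}
    {w : ℕ → E} {p : F} (hw : Tendsto (‖w ·‖) atTop atTop) (hfw : Tendsto (f ∘ w) atTop (𝓝 p)) :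
    ∃ d ≠ 0, f d = 0 ∧ ∃ ψ : ℕ → ℕ, StrictMono ψ ∧
      Tendsto (fun n => ‖w (ψ n)‖⁻¹ • w (ψ n)) atTop (𝓝 d) := by
  have hunit : ∀ᶠ n in atTop, ‖‖w n‖⁻¹ • w n‖ = 1 :=
    (hw.eventually_gt_atTop 0).mono fun n hn => by
      rw [norm_smul, norm_inv, norm_norm, inv_mul_cancel₀ hn.ne']
  obtain ⟨d, hd, ψ, hψ, hlim⟩ := tendsto_subseq_of_frequently_bounded
    (isBounded_sphere (x := (0 : E)) (r := 1))
    (hunit.mono fun n hn => mem_sphere_zero_iff_norm.2 hn).frequently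
  have hd1 : ‖d‖ = 1 :=
    mem_sphere_zero_iff_norm.1 ((isClosed_sphere (x := (0 : E)) (ε := 1)).closure_eq ▸ hd)
  refine ⟨d, norm_ne_zero_iff.1 (hd1.symm ▸ one_ne_zero), ?_, ψ, hψ, hlim⟩
  have hfd : Tendsto (fun n => ‖w (ψ n)‖⁻¹ • f (w (ψ n))) atTop (𝓝 ((0 : ℝ) • p)) :=
    (tendsto_inv_atTop_zero.comp (hw.comp hψ.tendsto_atTop)).smul (hfw.comp hψ.tendsto_atTop)
  simp only [← map_smul, zero_smul] at hfd
  exact tendsto_nhds_unique ((f.continuous.tendsto d).comp hlim) hfd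

theorem mem_image_of_tendsto_of_frequently_bounded {E F : Type*} [NormedAddCommGroup E]
    [ProperSpace E] [TopologicalSpace F] [T2Space F] {s : Set E} (hs : IsClosed s) {f : E → F}
    (hf : Continuous f) {w : ℕ → E} (hws : ∀ n, w n ∈ s) {p : F}
    (hfw : Tendsto (f ∘ w) atTop (𝓝 p)) {C : ℝ} (hC : ∃ᶠ n in atTop, ‖w n‖ ≤ C) : p ∈ f '' s := by
  obtain ⟨x, -, φ, hφ, hx⟩ := tendsto_subseq_of_frequently_bounded
    (isBounded_closedBall (x := (0 : E)) (r := C))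
    (hC.mono fun n hn => mem_closedBall_zero_iff.2 hn)
  exact ⟨x, hs.mem_of_tendsto hx (.of_forall fun n => hws _),
    tendsto_nhds_unique ((hf.tendsto x).comp hx) (hfw.comp hφ.tendsto_atTop)⟩

theorem isClosed_setOf_support_subset {ι M : Type*} [Zero M] [TopologicalSpace M] [T1Space M]
    (J : Set ι) : IsClosed {w : ι → M | support w ⊆ J} := by
  simp only [support_subset_iff', ofPred_forall]
  exact isClosed_biInter fun i _ => isClosed_singleton.preimage (continuous_apply i)

theorem tendsto_sum_sq_sub_cocompact {ι : Type*} [Fintype ι] (y : ι → ℝ) :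
    Tendsto (fun v : ι → ℝ => ∑ i, (v i - y i) ^ 2) (cocompact _) atTop := by
  have hdist : ∀ v : ι → ℝ, dist v y ^ 2 ≤ ∑ i, (v i - y i) ^ 2 := fun v => by
    rw [dist_eq_norm]
    refine (Real.le_sqrt (norm_nonneg _) (by positivity)).1 ((pi_norm_le_iff_of_nonneg
      (Real.sqrt_nonneg _)).2 fun i => Real.abs_le_sqrt ?_)
    exact Finset.single_le_sum (f := fun i => (v i - y i) ^ 2) (fun _ _ => sq_nonneg _)
      (Finset.mem_univ i)
  exact tendsto_atTop_mono hdist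
    ((tendsto_pow_atTop two_ne_zero).comp (tendsto_dist_right_cocompact_atTop y))

theorem IsClosed.exists_isMinOn_sum_sq_sub {ι : Type*} [Fintype ι] {s : Set (ι → ℝ)}
    (hs : IsClosed s) (hne : s.Nonempty) (y : ι → ℝ) :
    ∃ v ∈ s, IsMinOn (fun v => ∑ i, (v i - y i) ^ 2) s v := by
  obtain ⟨x₀, hx₀⟩ := hne
  have hf : Continuous fun v : ι → ℝ => ∑ i, (v i - y i) ^ 2 := by fun_prop
  exact hf.continuousOn.exists_isMinOn' hs hx₀
    (((tendsto_sum_sq_sub_cocompact y).eventually_ge_atTop _).filter_mono inf_le_left)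

namespace CPAdmissible

variable {N : ℕ} {P : Set (Fin N → ℝ)} {F : Type*} [NormedAddCommGroup F] [NormedSpace ℝ F]

theorem zero_mem (hcp : CPAdmissible P) (hne : P.Nonempty) : (0 : Fin N → ℝ) ∈ P := by
  obtain ⟨x, hx⟩ := hne
  have h := hcp x hx ∅ (empty_subset _)
  rwa [indicator_empty] at h

theorem update_zero_mem (hcp : CPAdmissible P) {x : Fin N → ℝ} (hx : x ∈ P) (j : Fin N) :
    update x j 0 ∈ P := by
  convert hcp x hx ({i | x i ≠ 0} \ {j}) sdiff_subset using 1
  ext i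
  by_cases h : i = j <;> by_cases hi : x i = 0 <;> simp [h, hi]

theorem update_mul_mem (hcp : CPAdmissible P) (hconv : Convex ℝ P) {x : Fin N → ℝ} (hx : x ∈ P)
    (j : Fin N) {a : ℝ} (ha : a ∈ Icc (0 : ℝ) 1) : update x j (a * x j) ∈ P := by
  convert hconv (hcp.update_zero_mem hx j) hx (sub_nonneg.2 ha.2) ha.1 (sub_add_cancel 1 a)
    using 1
  ext i
  by_cases h : i = j
  · subst h; simp
  · simp only [Pi.add_apply, Pi.smul_apply, smul_eq_mul, update_of_ne h]
    ring

theorem mul_mem (hcp : CPAdmissible P) (hconv : Convex ℝ P) {x : Fin N → ℝ} (hx : x ∈ P)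
    {c : Fin N → ℝ} (hc : ∀ i, c i ∈ Icc (0 : ℝ) 1) : c * x ∈ P := by
  suffices ∀ (S : Finset (Fin N)) (x : Fin N → ℝ), x ∈ P → ∀ c : Fin N → ℝ,
      (∀ i, c i ∈ Icc (0 : ℝ) 1) → (∀ i ∉ S, c i = 1) → c * x ∈ P from
    this Finset.univ x hx c hc (by simp)
  intro S
  induction S using Finset.induction_on with
  | empty =>
    intro x hx c _ hc1
    simpa [show c = 1 from funext fun i => hc1 i (Finset.notMem_empty i)] using hx
  | insert j S hjS IH =>
    intro x hx c hc hc1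
    have hcx : c * x = update c j 1 * update x j (c j * x j) := by
      ext i
      by_cases h : i = j
      · subst h; simp
      · simp [h]
    rw [hcx]
    refine IH _ (hcp.update_mul_mem hconv hx j (hc j)) _ (fun i => ?_) (fun i hi => ?_)
    · by_cases h : i = j
      · subst h; simp
      · simpa [h] using hc i
    · by_cases h : i = j
      · subst h; simp
      · simpa [h] using hc1 i (by simp [h, hi])

theorem exists_sub_smul_mem (hcp : CPAdmissible P) (hconv : Convex ℝ P) {w d : Fin N → ℝ}
    (hw : w ∈ P) (hd : d ≠ 0) (hsign : ∀ i, d i ≠ 0 → 0 < w i * d i) :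
    ∃ i, d i ≠ 0 ∧ ∃ t : ℝ,
      w - t • d ∈ P ∧ (w - t • d) i = 0 ∧ support (w - t • d) ⊆ support w := by
  have hratio : ∀ i, d i ≠ 0 → 0 < w i / d i := fun i hi =>
    mul_div_mul_right (w i) (d i) hi ▸ div_pos (hsign i hi) (mul_self_pos.2 hi)
  have hsupp : ∀ i, w i = 0 → d i = 0 := fun i hwi => by
    by_contra hi
    simpa [hwi] using hsign i hi
  obtain ⟨i₀, hi₀, hmin⟩ := Finset.exists_min_image {i | d i ≠ 0} (fun i => w i / d i)
    (by simpa [Finset.Nonempty, funext_iff] using hd)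
  simp only [Finset.mem_filter, Finset.mem_univ, true_and] at hi₀ hmin
  set t := w i₀ / d i₀
  -- By minimality of `t` the factors lie in `[0, 1]`; where `w i = 0` also `d i = 0`, and the
  -- factor is `1 - 0 = 1` since `x / 0 = 0`.
  have hscale : w - t • d = (fun i => 1 - t * d i / w i) * w := by
    ext i
    by_cases hwi : w i = 0
    · simp [hwi, hsupp i hwi]
    · simp only [Pi.sub_apply, Pi.smul_apply, smul_eq_mul, Pi.mul_apply]
      field_simp
  refine ⟨i₀, hi₀, t, ?_, by simp [t, div_mul_cancel₀ _ hi₀], ?_⟩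
  · refine hscale ▸ hcp.mul_mem hconv hw fun i => ?_
    by_cases hdi : d i = 0
    · simp [hdi]
    · have hr := hratio i hdi
      have h₀ : 0 ≤ t / (w i / d i) := div_nonneg (hratio i₀ hi₀).le hr.le
      have h₁ : t / (w i / d i) ≤ 1 := (div_le_one hr).2 (hmin i hdi)
      rw [← div_div_eq_mul_div]
      constructor <;> linarith
  · rw [hscale]
    exact support_mul_subset_right _ _

theorem map_mem_biUnion_image_diff_singleton (hcp : CPAdmissible P) (hconv : Convex ℝ P)
    (f : (Fin N → ℝ) →ₗ[ℝ] F) {J : Set (Fin N)} {w d : Fin N → ℝ} (hw : w ∈ P)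
    (hwJ : support w ⊆ J) (hd : d ≠ 0) (hfd : f d = 0) (hsign : ∀ i, d i ≠ 0 → 0 < w i * d i) :
    f w ∈ ⋃ i ∈ J, f '' {v | v ∈ P ∧ support v ⊆ J \ {i}} := by
  obtain ⟨i, hi, t, hmem, hzero, hsupp⟩ := hcp.exists_sub_smul_mem hconv hw hd hsign
  refine mem_iUnion₂.2 ⟨i, hwJ (left_ne_zero_of_mul (hsign i hi).ne'), w - t • d,
    ⟨hmem, fun j hj => ⟨hwJ (hsupp hj), ?_⟩⟩, by simp [hfd]⟩
  rintro rfl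
  exact hj hzero

theorem isClosed_image (hcp : CPAdmissible P) (hcl : IsClosed P) (hconv : Convex ℝ P)
    (f : (Fin N → ℝ) →ₗ[ℝ] F) (J : Set (Fin N)) :
    IsClosed (f '' {w | w ∈ P ∧ support w ⊆ J}) := by
  induction J using WellFoundedLT.induction with
  | _ J IH =>
  refine IsSeqClosed.isClosed fun v p hv hvp => ?_
  choose w hw hfw using hv
  replace hvp : Tendsto (f ∘ w) atTop (𝓝 p) := by simpa only [comp_def, hfw] using hvp
  by_cases hbdd : ∃ C, ∃ᶠ n in atTop, ‖w n‖ ≤ C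
  · obtain ⟨C, hC⟩ := hbdd
    exact mem_image_of_tendsto_of_frequently_bounded (hcl.inter (isClosed_setOf_support_subset J))
      f.continuous_of_finiteDimensional hw hvp hC
  simp only [not_exists, not_frequently, not_le] at hbdd
  have hunb : Tendsto (‖w ·‖) atTop atTop :=
    tendsto_atTop.2 fun C => (hbdd C).mono fun _ => le_of_lt
  obtain ⟨d, hd, hfd, ψ, hψ, hlim⟩ :=
    exists_ne_zero_map_eq_zero_of_tendsto_norm_atTop (f := f.toContinuousLinearMap) hunb hvp
  have hclosed : IsClosed (⋃ i ∈ J, f '' {v | v ∈ P ∧ support v ⊆ J \ {i}}) :=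
    J.toFinite.isClosed_biUnion fun i hi => IH _ (sdiff_singleton_ssubset.2 hi)
  have hev : ∀ᶠ n in atTop, f (w (ψ n)) ∈ ⋃ i ∈ J, f '' {v | v ∈ P ∧ support v ⊆ J \ {i}} :=
    (eventually_pos_mul_of_tendsto hlim).mono fun n hn =>
      hcp.map_mem_biUnion_image_diff_singleton hconv f (hw _).1 (hw _).2 hd hfd fun i hi =>
        pos_of_mul_pos_right (by simpa [mul_assoc] using hn i hi) (inv_nonneg.2 (norm_nonneg _))
  obtain ⟨i, -, hp⟩ := mem_iUnion₂.1 (hclosed.mem_of_tendsto (hvp.comp hψ.tendsto_atTop) hev)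
  refine image_mono ?_ hp
  exact fun v hv => ⟨hv.1, hv.2.trans sdiff_subset⟩

end CPAdmissible

/-- For a closed, convex, CP admissible set `P`, any matrix `A`, any index set `J`
and any `y`, the problem `min ‖A w − y‖₂²` s.t. `w ∈ P`, `supp(w) ⊆ J` attains a
solution; in particular `A P` is closed. -/
theorem stmt_10 {N m : ℕ} (P : Set (Fin N → ℝ)) (hne : P.Nonempty)
    (hcl : IsClosed P) (hconv : Convex ℝ P) (hcp : CPAdmissible P)
    (A : Matrix (Fin m) (Fin N) ℝ) :
    (∀ (J : Set (Fin N)) (y : Fin m → ℝ),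
      ∃ w : Fin N → ℝ, (w ∈ P ∧ {i | w i ≠ 0} ⊆ J) ∧
        ∀ w' : Fin N → ℝ, w' ∈ P → {i | w' i ≠ 0} ⊆ J →
          ∑ i, (A.mulVec w - y) i ^ 2 ≤ ∑ i, (A.mulVec w' - y) i ^ 2) ∧
    IsClosed (A.mulVec '' P) := by
  have hclosed (J : Set (Fin N)) : IsClosed (A.mulVec '' {w | w ∈ P ∧ support w ⊆ J}) :=
    hcp.isClosed_image hcl hconv A.mulVecLin J
  refine ⟨fun J y => ?_, by simpa using hclosed univ⟩
  have h0 : A.mulVec 0 ∈ A.mulVec '' {w | w ∈ P ∧ support w ⊆ J} :=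
    mem_image_of_mem _ ⟨hcp.zero_mem hne, by simp⟩
  obtain ⟨_, ⟨w, hw, rfl⟩, hmin⟩ := (hclosed J).exists_isMinOn_sum_sq_sub ⟨_, h0⟩ y
  exact ⟨w, hw, fun w' hw' hw'J => isMinOn_iff.1 hmin _ ⟨w', ⟨hw', hw'J⟩, rfl⟩⟩
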